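/- Let P = {e_1,…,e_m} be an atomic Cartesian decomposition of a finite set Ω, and let R be another atomic Cartesian decomposition of Ω with R ⪯ P (every element of P is contained in some element of R). Then there is a partition 𝓡 of M = {1,…,m} such that R = {P_I : I ∈ 𝓡}. -/

import Mathlib

open Set

def rcomp {Ω : Type*} (r s : Set (Ω × Ω)) : Set (Ω × Ω) :=
  {p | ∃ γ, (p.1, γ) ∈ r ∧ (γ, p.2) ∈ s}

def rconv {Ω : Type*} (r : Set (Ω × Ω)) : Set (Ω × Ω) := {p | (p.2, p.1) ∈ r}

def rdiag (Ω : Type*) : Set (Ω × Ω) := {p | p.1 = p.2}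

def IsEquivRel {Ω : Type*} (e : Set (Ω × Ω)) : Prop :=
  Equivalence (fun a b => (a, b) ∈ e)

/-- The smallest equivalence relation containing `r`. -/
def eqvClosure {Ω : Type*} (r : Set (Ω × Ω)) : Set (Ω × Ω) :=
  ⋂₀ {e | IsEquivRel e ∧ r ⊆ e}

/-- Join of two equivalence relations. -/
def rjoin {Ω : Type*} (e f : Set (Ω × Ω)) : Set (Ω × Ω) := eqvClosure (e ∪ f)

def IsClass {Ω : Type*} (e : Set (Ω × Ω)) (Δ : Set Ω) : Prop :=
  ∃ α, Δ = {β | (α, β) ∈ e}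

def setoidRel {Ω : Type*} (e : Setoid Ω) : Set (Ω × Ω) := {p | e.r p.1 p.2}

/-- The relation induced on the quotient `Ω/e` by a relation `r` on `Ω`. -/
def qmap {Ω : Type*} (e : Setoid Ω) (r : Set (Ω × Ω)) :
    Set (Quotient e × Quotient e) :=
  {p | ∃ a b : Ω, Quotient.mk e a = p.1 ∧ Quotient.mk e b = p.2 ∧ (a, b) ∈ r}

/-- Tensor product of relations. -/
def tensorRel {m : ℕ} {Ω : Fin m → Type*} (s : ∀ i, Set (Ω i × Ω i)) :
    Set ((∀ i, Ω i) × (∀ i, Ω i)) :=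
  {p | ∀ i, (p.1 i, p.2 i) ∈ s i}

def tensor2 {Ω₁ Ω₂ : Type*} (s₁ : Set (Ω₁ × Ω₁)) (s₂ : Set (Ω₂ × Ω₂)) :
    Set ((Ω₁ × Ω₂) × (Ω₁ × Ω₂)) :=
  {p | (p.1.1, p.2.1) ∈ s₁ ∧ (p.1.2, p.2.2) ∈ s₂}

/-- `PP e I` is the join of the equivalence relations `e i`, `i ∈ I`. -/
def PP {Ω : Type*} {m : ℕ} (e : Fin m → Set (Ω × Ω)) (I : Set (Fin m)) :
    Set (Ω × Ω) :=
  eqvClosure (⋃ i ∈ I, e i)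

/-- An atomic Cartesian decomposition, given as a family of equivalence relations. -/
def IsACDfam {Ω : Type*} {m : ℕ} (e : Fin m → Set (Ω × Ω)) : Prop :=
  0 < m ∧ (∀ i, IsEquivRel (e i)) ∧ (∀ i, e i ≠ rdiag Ω) ∧
  (∀ i j, rcomp (e i) (e j) = rcomp (e j) (e i)) ∧
  (∀ i, e i ∩ PP e ({i}ᶜ) = rdiag Ω) ∧
  (∀ i, rjoin (e i) (PP e ({i}ᶜ)) = Set.univ)

/-- Join of a set of relations. -/
def joinAll {Ω : Type*} (B : Set (Set (Ω × Ω))) : Set (Ω × Ω) := eqvClosure (⋃₀ B)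

/-- The `P`-complement of `e`: the join of the members of `P` other than `e`. -/
def pcompl {Ω : Type*} (P : Set (Set (Ω × Ω))) (e : Set (Ω × Ω)) : Set (Ω × Ω) :=
  joinAll (P \ {e})

/-- An atomic Cartesian decomposition, given as a set of equivalence relations. -/
def IsACD {Ω : Type*} (P : Set (Set (Ω × Ω))) : Prop :=
  P.Nonempty ∧ (∀ e ∈ P, IsEquivRel e ∧ e ≠ rdiag Ω) ∧
  (∀ e ∈ P, ∀ f ∈ P, rcomp e f = rcomp f e) ∧
  (∀ e ∈ P, e ∩ pcompl P e = rdiag Ω ∧ rjoin e (pcompl P e) = Set.univ)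

def IsPartitionOf {α : Type*} (P : Set α) (C : Set (Set α)) : Prop :=
  (∀ B ∈ C, B.Nonempty) ∧ (∀ B ∈ C, ∀ B' ∈ C, B ≠ B' → Disjoint B B') ∧ ⋃₀ C = P

/-- A coherent configuration on `Ω`. -/
structure CohCfg (Ω : Type*) where
  S : Set (Set (Ω × Ω))
  empty_not_mem : ∅ ∉ S
  cover : ∀ p : Ω × Ω, ∃ s ∈ S, p ∈ s
  pairwise_disjoint : ∀ s ∈ S, ∀ t ∈ S, s ≠ t → Disjoint s t
  diag_union : ∀ s ∈ S, (s ∩ rdiag Ω).Nonempty → s ⊆ rdiag Ω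
  conv_mem : ∀ s ∈ S, rconv s ∈ S
  inter_const : ∀ r ∈ S, ∀ s ∈ S, ∀ t ∈ S, ∀ p ∈ t, ∀ q ∈ t,
    ({γ : Ω | (p.1, γ) ∈ r ∧ (γ, p.2) ∈ s}).ncard
      = ({γ : Ω | (q.1, γ) ∈ r ∧ (γ, q.2) ∈ s}).ncard

/-- The valency of a basis relation (the common size of the rows over the left support). -/
noncomputable def valency {Ω : Type*} (s : Set (Ω × Ω)) : ℕ :=
  sSup ((fun α => ({β | (α, β) ∈ s} : Set Ω).ncard) '' {α | ∃ β, (α, β) ∈ s})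

def IsThick {Ω : Type*} (X : CohCfg Ω) : Prop :=
  ∀ s ∈ X.S, Disjoint s (rdiag Ω) → ¬(valency s = 1 ∧ valency (rconv s) = 1)

def IsParabolic {Ω : Type*} (X : CohCfg Ω) (e : Set (Ω × Ω)) : Prop :=
  IsEquivRel e ∧ ∀ s ∈ X.S, (s ∩ e).Nonempty → s ⊆ e

def Perp {Ω : Type*} (X : CohCfg Ω) (e f : Set (Ω × Ω)) : Prop :=
  ∀ x ∈ X.S, x ⊆ e → ∀ y ∈ X.S, y ⊆ f → (rcomp x y).Nonempty → rcomp x y ∈ X.S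

def Redundant {Ω : Type*} (X : CohCfg Ω) (s : Set (Ω × Ω)) : Prop :=
  ∃ x ∈ X.S, ∃ y ∈ X.S, Disjoint x (rdiag Ω) ∧ Disjoint y (rdiag Ω) ∧
    s = rcomp x y ∧ eqvClosure x ∩ eqvClosure y = rdiag Ω

/-! Every member of `P` lies in a unique member `f` of `R`, so the blocks `{e ∈ P | e ⊆ f}`
partition `P`. Let `g` be the join of the block of `f` and `h` the join of the rest of `P`.
Since the members of `P` commute, so do `g` and `h`, hence `g ∘ h = g ∨ h = ⋁ P = Ω × Ω`. As
`g ⊆ f` and `h` lies in the `R`-complement of `f`, which meets `f` only in the diagonal, the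
modular law gives `f = g`. -/

section Closure

variable {Ω : Type*}

theorem isEquivRel_eqvClosure (r : Set (Ω × Ω)) : IsEquivRel (eqvClosure r) :=
  ⟨fun a _ he => he.1.refl a, fun hab e he => he.1.symm (hab e he),
    fun hab hbc e he => he.1.trans (hab e he) (hbc e he)⟩

theorem subset_eqvClosure (r : Set (Ω × Ω)) : r ⊆ eqvClosure r :=
  fun _ hp _ he => he.2 hp

theorem eqvClosure_subset {r e : Set (Ω × Ω)} (he : IsEquivRel e) (h : r ⊆ e) :
    eqvClosure r ⊆ e :=
  sInter_subset_of_mem ⟨he, h⟩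

theorem IsEquivRel.rdiag_subset {e : Set (Ω × Ω)} (he : IsEquivRel e) : rdiag Ω ⊆ e := by
  rintro ⟨a, b⟩ (rfl : a = b)
  exact he.refl a

theorem eqvClosure_empty : eqvClosure (∅ : Set (Ω × Ω)) = rdiag Ω := by
  have hdiag : IsEquivRel (rdiag Ω) := ⟨fun _ => rfl, Eq.symm, Eq.trans⟩
  exact (eqvClosure_subset hdiag (empty_subset _)).antisymm
    (isEquivRel_eqvClosure _).rdiag_subset

theorem eqvClosure_subset_of_refl_of_trans {r X : Set (Ω × Ω)}
    (hr : ∀ a b, (a, b) ∈ r → (b, a) ∈ r) (hrefl : ∀ a, (a, a) ∈ X)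
    (htrans : ∀ a b c, (a, b) ∈ X → (b, c) ∈ X → (a, c) ∈ X) (hrX : r ⊆ X) :
    eqvClosure r ⊆ X := by
  have hsymm : IsEquivRel {p | p ∈ X ∧ p.swap ∈ X} :=
    ⟨fun a => ⟨hrefl a, hrefl a⟩, fun h => ⟨h.2, h.1⟩,
      fun hab hbc => ⟨htrans _ _ _ hab.1 hbc.1, htrans _ _ _ hbc.2 hab.2⟩⟩
  exact fun p hp => (eqvClosure_subset hsymm (fun q hq => ⟨hrX hq, hrX (hr _ _ hq)⟩) hp).1

theorem isEquivRel_joinAll (S : Set (Set (Ω × Ω))) : IsEquivRel (joinAll S) :=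
  isEquivRel_eqvClosure _

theorem subset_joinAll {S : Set (Set (Ω × Ω))} {s : Set (Ω × Ω)} (hs : s ∈ S) :
    s ⊆ joinAll S :=
  fun _ hp => subset_eqvClosure _ ⟨s, hs, hp⟩

theorem joinAll_subset {S : Set (Set (Ω × Ω))} {e : Set (Ω × Ω)} (he : IsEquivRel e)
    (h : ∀ s ∈ S, s ⊆ e) : joinAll S ⊆ e :=
  eqvClosure_subset he (sUnion_subset h)

theorem joinAll_mono {S T : Set (Set (Ω × Ω))} (h : S ⊆ T) : joinAll S ⊆ joinAll T :=
  joinAll_subset (isEquivRel_joinAll T) fun _ hs => subset_joinAll (h hs)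

theorem joinAll_union (S T : Set (Set (Ω × Ω))) :
    joinAll (S ∪ T) = rjoin (joinAll S) (joinAll T) := by
  apply (joinAll_subset (isEquivRel_eqvClosure _) _).antisymm
  · exact eqvClosure_subset (isEquivRel_joinAll _)
      (union_subset (joinAll_mono subset_union_left) (joinAll_mono subset_union_right))
  · rintro s (hs | hs)
    · exact (subset_joinAll hs).trans ((subset_eqvClosure _).trans' subset_union_left)
    · exact (subset_joinAll hs).trans ((subset_eqvClosure _).trans' subset_union_right)

end Closure

section Composition

variable {Ω : Type*}

theorem rcomp_comm_of_subset {e f : Set (Ω × Ω)} (he : IsEquivRel e) (hf : IsEquivRel f)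
    (h : rcomp e f ⊆ rcomp f e) : rcomp e f = rcomp f e := by
  refine h.antisymm ?_
  rintro ⟨a, b⟩ ⟨γ, haγ, hγb⟩
  obtain ⟨δ, hbδ, hδa⟩ := h (show (b, a) ∈ rcomp e f from ⟨γ, he.symm hγb, hf.symm haγ⟩)
  exact ⟨δ, he.symm hδa, hf.symm hbδ⟩

theorem rcomp_joinAll_comm {e : Set (Ω × Ω)} {S : Set (Set (Ω × Ω))} (he : IsEquivRel e)
    (hS : ∀ s ∈ S, IsEquivRel s) (hcomm : ∀ s ∈ S, rcomp e s = rcomp s e) :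
    rcomp e (joinAll S) = rcomp (joinAll S) e := by
  have hJ := isEquivRel_joinAll S
  refine rcomp_comm_of_subset he hJ ?_
  set X : Set (Ω × Ω) := {p | ∀ a, (a, p.1) ∈ e → (a, p.2) ∈ rcomp (joinAll S) e}
  suffices joinAll S ⊆ X from fun ⟨a, b⟩ ⟨γ, haγ, hγb⟩ => this hγb a haγ
  refine eqvClosure_subset_of_refl_of_trans ?_ ?_ ?_ ?_
  · rintro a b ⟨s, hs, hab⟩
    exact ⟨s, hs, (hS s hs).symm hab⟩
  · exact fun γ a haγ => ⟨a, hJ.refl a, haγ⟩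
  · intro γ b c hγb hbc a haγ
    obtain ⟨δ, haδ, hδb⟩ := hγb a haγ
    obtain ⟨ε, hδε, hεc⟩ := hbc δ hδb
    exact ⟨ε, hJ.trans haδ hδε, hεc⟩
  · rintro ⟨γ, b⟩ ⟨s, hs, hγb⟩ a haγ
    obtain ⟨δ, haδ, hδb⟩ := (hcomm s hs).le (show (a, b) ∈ rcomp e s from ⟨γ, haγ, hγb⟩)
    exact ⟨δ, subset_joinAll hs haδ, hδb⟩

theorem rcomp_joinAll_joinAll_comm {S T : Set (Set (Ω × Ω))} (hS : ∀ s ∈ S, IsEquivRel s)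
    (hT : ∀ t ∈ T, IsEquivRel t) (hcomm : ∀ s ∈ S, ∀ t ∈ T, rcomp s t = rcomp t s) :
    rcomp (joinAll S) (joinAll T) = rcomp (joinAll T) (joinAll S) :=
  rcomp_joinAll_comm (isEquivRel_joinAll S) hT fun t ht =>
    (rcomp_joinAll_comm (hT t ht) hS fun s hs => (hcomm s hs t ht).symm).symm

theorem rjoin_eq_rcomp {g h : Set (Ω × Ω)} (hg : IsEquivRel g) (hh : IsEquivRel h)
    (hcomm : rcomp g h = rcomp h g) : rjoin g h = rcomp g h := by
  have hgh : IsEquivRel (rcomp g h) := by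
    refine ⟨fun a => ⟨a, hg.refl a, hh.refl a⟩, ?_, ?_⟩
    · rintro a b ⟨γ, haγ, hγb⟩
      exact hcomm ▸ (show (b, a) ∈ rcomp h g from ⟨γ, hh.symm hγb, hg.symm haγ⟩)
    · rintro a b c ⟨γ, haγ, hγb⟩ ⟨δ, hbδ, hδc⟩
      obtain ⟨ε, hγε, hεδ⟩ := hcomm ▸ (show (γ, δ) ∈ rcomp h g from ⟨b, hγb, hbδ⟩)
      exact ⟨ε, hg.trans haγ hγε, hh.trans hεδ hδc⟩
  refine (eqvClosure_subset hgh ?_).antisymm ?_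
  · rintro ⟨a, b⟩ (hab | hab)
    exacts [⟨b, hab, hh.refl b⟩, ⟨a, hg.refl a, hab⟩]
  · rintro ⟨a, b⟩ ⟨γ, haγ, hγb⟩
    have hj := isEquivRel_eqvClosure (g ∪ h)
    exact hj.trans (subset_eqvClosure _ (Or.inl haγ)) (subset_eqvClosure _ (Or.inr hγb))

/-- A form of Dedekind's modular law. -/
theorem subset_of_rcomp_eq_univ {f g h : Set (Ω × Ω)} (hf : IsEquivRel f) (hgf : g ⊆ f)
    (hgh : rcomp g h = univ) (hfh : f ∩ h ⊆ rdiag Ω) : f ⊆ g := by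
  rintro ⟨a, b⟩ hab
  obtain ⟨γ, haγ, hγb⟩ : (a, b) ∈ rcomp g h := hgh ▸ mem_univ _
  obtain rfl : γ = b := hfh ⟨hf.trans (hf.symm (hgf haγ)) hab, hγb⟩
  exact haγ

end Composition

section CartesianDecomposition

variable {Ω : Type*} {P R : Set (Set (Ω × Ω))}

theorem IsACD.isEquivRel (hP : IsACD P) {e : Set (Ω × Ω)} (he : e ∈ P) : IsEquivRel e :=
  (hP.2.1 e he).1

theorem IsACD.not_subset_rdiag (hP : IsACD P) {e : Set (Ω × Ω)} (he : e ∈ P) :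
    ¬e ⊆ rdiag Ω :=
  fun h => (hP.2.1 e he).2 (h.antisymm (hP.isEquivRel he).rdiag_subset)

theorem IsACD.inter_subset_rdiag (hP : IsACD P) {e x : Set (Ω × Ω)} (he : e ∈ P)
    (hx : x ⊆ pcompl P e) : e ∩ x ⊆ rdiag Ω :=
  (hP.2.2.2 e he).1 ▸ inter_subset_inter_right e hx

theorem IsACD.joinAll_eq_univ (hP : IsACD P) : joinAll P = univ := by
  obtain ⟨e, he⟩ := hP.1
  refine univ_subset_iff.mp ?_
  rw [← (hP.2.2.2 e he).2]
  exact eqvClosure_subset (isEquivRel_joinAll P)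
    (union_subset (subset_joinAll he) (joinAll_mono sdiff_subset))

theorem IsACD.eq_of_subset_of_subset (hR : IsACD R) {e f f' : Set (Ω × Ω)}
    (he : ¬e ⊆ rdiag Ω) (hf : f ∈ R) (hf' : f' ∈ R) (hef : e ⊆ f) (hef' : e ⊆ f') :
    f = f' := by
  by_contra hne
  exact he fun p hp => hR.inter_subset_rdiag hf (subset_joinAll ⟨hf', Ne.symm hne⟩)
    ⟨hef hp, hef' hp⟩

def blockOf (P : Set (Set (Ω × Ω))) (f : Set (Ω × Ω)) : Set (Set (Ω × Ω)) :=
  {e ∈ P | e ⊆ f}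

theorem blockOf_subset (P : Set (Set (Ω × Ω))) (f : Set (Ω × Ω)) : blockOf P f ⊆ P :=
  sep_subset _ _

variable (hP : IsACD P) (hR : IsACD R) (hle : ∀ e ∈ P, ∃ f ∈ R, e ⊆ f)
include hP hR hle

theorem joinAll_blockOf {f : Set (Ω × Ω)} (hf : f ∈ R) : joinAll (blockOf P f) = f := by
  have hPeq : ∀ e ∈ P, IsEquivRel e := fun e he => hP.isEquivRel he
  have hgf : joinAll (blockOf P f) ⊆ f := joinAll_subset (hR.isEquivRel hf) fun _ he => he.2
  have hrest : joinAll (P \ blockOf P f) ⊆ pcompl R f := by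
    refine joinAll_subset (isEquivRel_joinAll _) fun e ⟨heP, heB⟩ => ?_
    obtain ⟨f', hf', hef'⟩ := hle e heP
    have hne : f' ≠ f := by
      rintro rfl
      exact heB ⟨heP, hef'⟩
    exact hef'.trans (subset_joinAll ⟨hf', hne⟩)
  have hgh : rcomp (joinAll (blockOf P f)) (joinAll (P \ blockOf P f)) = univ := by
    rw [← rjoin_eq_rcomp (isEquivRel_joinAll _) (isEquivRel_joinAll _)
      (rcomp_joinAll_joinAll_comm (fun e he => hPeq e he.1) (fun e he => hPeq e he.1)
        fun e he e' he' => hP.2.2.1 e he.1 e' he'.1),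
      ← joinAll_union, union_sdiff_cancel (blockOf_subset P f), hP.joinAll_eq_univ]
  exact hgf.antisymm <| subset_of_rcomp_eq_univ (hR.isEquivRel hf) hgf hgh
    (hR.inter_subset_rdiag hf hrest)

theorem isPartitionOf_image_blockOf : IsPartitionOf P (blockOf P '' R) := by
  refine ⟨?_, ?_, ?_⟩
  · rintro _ ⟨f, hf, rfl⟩
    refine nonempty_iff_ne_empty.mpr fun hB => (hR.2.1 f hf).2 ?_
    rw [← joinAll_blockOf hP hR hle hf, hB, joinAll, sUnion_empty, eqvClosure_empty]
  · rintro _ ⟨f, hf, rfl⟩ _ ⟨f', hf', rfl⟩ hne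
    refine disjoint_left.mpr fun e he he' => hne ?_
    rw [hR.eq_of_subset_of_subset (hP.not_subset_rdiag he.1) hf hf' he.2 he'.2]
  · refine (sUnion_subset ?_).antisymm fun e he => ?_
    · rintro _ ⟨f, -, rfl⟩
      exact blockOf_subset P f
    · obtain ⟨f, hf, hef⟩ := hle e he
      exact ⟨blockOf P f, mem_image_of_mem _ hf, he, hef⟩

end CartesianDecomposition

theorem stmt10_general {Ω : Type*} (P R : Set (Set (Ω × Ω)))
    (hP : IsACD P) (hR : IsACD R)
    (hle : ∀ e ∈ P, ∃ f ∈ R, e ⊆ f) :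
    ∃ C : Set (Set (Set (Ω × Ω))),
      IsPartitionOf P C ∧ R = {g | ∃ B ∈ C, g = joinAll B} := by
  refine ⟨blockOf P '' R, isPartitionOf_image_blockOf hP hR hle, ?_⟩
  ext f
  constructor
  · exact fun hf => ⟨blockOf P f, mem_image_of_mem _ hf, (joinAll_blockOf hP hR hle hf).symm⟩
  · rintro ⟨_, ⟨f', hf', rfl⟩, rfl⟩
    rwa [joinAll_blockOf hP hR hle hf']

/-- if `R ⪯ P` are atomic Cartesian decompositions, then `R`
consists of the joins of the blocks of a partition of `P`. -/
theorem stmt10 {Ω : Type*} [Fintype Ω] (P R : Set (Set (Ω × Ω)))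
    (hP : IsACD P) (hR : IsACD R)
    (hle : ∀ e ∈ P, ∃ f ∈ R, e ⊆ f) :
    ∃ C : Set (Set (Set (Ω × Ω))),
      IsPartitionOf P C ∧ R = {g | ∃ B ∈ C, g = joinAll B} :=
  stmt10_general P R hP hR hle
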